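/- First-order optimality of the adjoint KKT system: suppose the triple (u*, T*, ũ*) satisfies the three stationarity conditions of the Lagrangian: (i) the forward problem K ·ᵥ u* = f_ext + f_T(T*); (ii) the adjoint problem Kᵀ ·ᵥ ũ* = g, where g is the gradient of u ↦ I(u, T*) at u*; and (iii) the gradient condition D_T I(u*, ·)(T*)[h] + ⟨ũ*, Df_T(T*)[h]⟩ = 0 for all directions h. Then T* is a critical point of the reduced cost Ĩ(T) = I(u(T), T), i.e., the Fréchet derivative of Ĩ at T* is the zero map. -/

import Mathlib

/-! The reduced cost is `I` composed with the graph `T ↦ (u T, T)`, so by the chain rule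
its derivative in direction `h` is `∂ᵤI (u' h) + ∂_T I h`, where `u' h = K⁻¹ (Df_T h)`.
The adjoint equation turns the first term into `⟨Kᵀ ũ, K⁻¹ Df_T h⟩ = ⟨ũ, Df_T h⟩`, and
the gradient condition says that the sum vanishes. -/

open Matrix

theorem Matrix.transpose_mulVec_dotProduct_inv_mulVec {n R : Type*} [Fintype n] [DecidableEq n]
    [CommRing R] (K : Matrix n n R) [Invertible K] (w v : n → R) :
    Kᵀ *ᵥ w ⬝ᵥ K⁻¹ *ᵥ v = w ⬝ᵥ v := by
  rw [mulVec_transpose, ← dotProduct_mulVec, mulVec_mulVec, mul_inv_of_invertible, one_mulVec]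

section GraphChainRule

variable {𝕜 E F G : Type*} [NontriviallyNormedField 𝕜]
  [NormedAddCommGroup E] [NormedSpace 𝕜 E] [NormedAddCommGroup F] [NormedSpace 𝕜 F]
  [NormedAddCommGroup G] [NormedSpace 𝕜 G]

theorem DifferentiableAt.hasFDerivAt_comp_graph {I : E × F → G} {u : F → E}
    {u' : F →L[𝕜] E} {x : F} (hI : DifferentiableAt 𝕜 I (u x, x)) (hu : HasFDerivAt u u' x) :
    HasFDerivAt (fun y => I (u y, y))
      (fderiv 𝕜 (fun w => I (w, x)) (u x) ∘L u' + fderiv 𝕜 (fun y => I (u x, y)) x) x := by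
  have hDI := hI.hasFDerivAt
  have h_left : fderiv 𝕜 (fun w => I (w, x)) (u x) = fderiv 𝕜 I (u x, x) ∘L .inl 𝕜 E F :=
    (hDI.comp (u x) (hasFDerivAt_prodMk_left (𝕜 := 𝕜) (u x) x)).fderiv
  have h_right : fderiv 𝕜 (fun y => I (u x, y)) x = fderiv 𝕜 I (u x, x) ∘L .inr 𝕜 E F :=
    (hDI.comp x (hasFDerivAt_prodMk_right (𝕜 := 𝕜) (u x) x)).fderiv
  refine (hDI.comp (f := fun y => (u y, y)) x (hu.prodMk (hasFDerivAt_id x))).congr_fderiv ?_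
  ext h
  simp only [h_left, h_right, _root_.add_apply, ContinuousLinearMap.comp_apply,
    ContinuousLinearMap.prod_apply, ContinuousLinearMap.inl_apply, ContinuousLinearMap.inr_apply,
    ContinuousLinearMap.id_apply, ← map_add, Prod.mk_add_mk, add_zero, zero_add]

end GraphChainRule

/-- First-order optimality of the adjoint KKT system: if `(u*, T*, utilde*)`
satisfies (i) the forward problem `K ·ᵥ u* = f_ext + f_T T*`, (ii) the adjoint problem
`Kᵀ ·ᵥ utilde* = g` with `g` the gradient of `u ↦ I (u, T*)` at `u*`, and (iii) the gradient
condition `D_T I(u*, ·)(T*)[h] + ⟨utilde*, Df_T(T*)[h]⟩ = 0` for all `h`, then `T*` is a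
critical point of the reduced cost `Ĩ T = I (u T, T)`. -/
theorem adjoint_KKT_first_order_optimality
    (N M : ℕ) (K : Matrix (Fin N) (Fin N) ℝ) (hK : IsUnit K)
    (f_ext : Fin N → ℝ) (f_T : (Fin M → ℝ) → (Fin N → ℝ))
    (hf : Differentiable ℝ f_T)
    (u : (Fin M → ℝ) → (Fin N → ℝ))
    (hu : ∀ T, u T = (K⁻¹).mulVec (f_ext + f_T T))
    (I : (Fin N → ℝ) × (Fin M → ℝ) → ℝ) (hI : Differentiable ℝ I)
    (Tstar : Fin M → ℝ) (ustar utildestar g : Fin N → ℝ)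
    (hforward : K.mulVec ustar = f_ext + f_T Tstar)
    (hg : ∀ v : Fin N → ℝ, fderiv ℝ (fun w => I (w, Tstar)) ustar v = ∑ i, g i * v i)
    (hadjoint : K.transpose.mulVec utildestar = g)
    (hgrad : ∀ h : Fin M → ℝ,
      fderiv ℝ (fun T => I (ustar, T)) Tstar h + ∑ i, utildestar i * fderiv ℝ f_T Tstar h i = 0) :
    fderiv ℝ (fun T => I (u T, T)) Tstar = 0 := by
  have := hK.invertible
  have h_state : u Tstar = ustar := (hu Tstar).trans (inv_mulVec_eq_vec hforward.symm)
  have h_sens :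
      HasFDerivAt u (K⁻¹.mulVecLin.toContinuousLinearMap ∘L fderiv ℝ f_T Tstar) Tstar := by
    rw [funext hu]
    exact K⁻¹.mulVecLin.toContinuousLinearMap.hasFDerivAt.comp Tstar
      ((hf Tstar).hasFDerivAt.const_add f_ext)
  have h_reduced := (hI (u Tstar, Tstar)).hasFDerivAt_comp_graph h_sens
  rw [h_reduced.fderiv, h_state]
  ext h
  have h_adjoint_term :
      fderiv ℝ (fun w => I (w, Tstar)) ustar (K⁻¹ *ᵥ fderiv ℝ f_T Tstar h) =
        ∑ i, utildestar i * fderiv ℝ f_T Tstar h i := by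
    rw [hg, ← hadjoint]
    exact K.transpose_mulVec_dotProduct_inv_mulVec utildestar _
  simpa [h_adjoint_term, add_comm] using hgrad h
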